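/- Let λ₁,…,λₙ be real numbers and 1 ≤ r < n. If S_r(λ₁,…,λₙ) = 0 and S_{r+1}(λ₁,…,λₙ) = 0, then S_j(λ₁,…,λₙ) = 0 for all r ≤ j ≤ n. -/

import Mathlib

/-!
Differentiating `∏ (X - λᵢ)` keeps all roots real (Rolle) and multiplies `S_j` by the nonzero
factor `(n - j) / n` for `j < n`. So by induction on `n` the vanishing of `S_r` and `S_{r+1}`
passes to the critical points, whose `S_j` then vanish for `r ≤ j ≤ n - 1`, and this passes back
to the `λᵢ`. The top index `j = n` is invisible to the derivative: there, if `S_n = ∏ λᵢ ≠ 0`, the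
reciprocals `μᵢ = λᵢ⁻¹` satisfy `S_k(μ) S_n(λ) = S_{n-k}(λ)`, so `S_1(μ) = S_2(μ) = 0` and
`∑ μᵢ² = S_1(μ)² - 2 S_2(μ) = 0`, which is absurd.
-/

/-- The `r`-th elementary symmetric polynomial of `v`. -/
noncomputable def esymm (n r : ℕ) (v : Fin n → ℝ) : ℝ :=
  ∑ s ∈ Finset.powersetCard r Finset.univ, ∏ i ∈ s, v i

open Polynomial

namespace Multiset

section CommSemiring
variable {R : Type*} [CommSemiring R] (s : Multiset R)

@[simp] lemma esymm_zero : s.esymm 0 = 1 := by simp [esymm]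

lemma esymm_one : s.esymm 1 = s.sum := by simp [esymm, powersetCard_one]

lemma esymm_eq_zero_of_card_lt {k : ℕ} (hk : card s < k) : s.esymm k = 0 := by
  simp [esymm, powersetCard_eq_empty _ hk]

lemma esymm_cons_succ (a : R) (k : ℕ) :
    (a ::ₘ s).esymm (k + 1) = s.esymm (k + 1) + a * s.esymm k := by
  simp [esymm, powersetCard_cons, sum_map_mul_left]

lemma esymm_card : s.esymm (card s) = s.prod := by simp [esymm, powersetCard_self]

end CommSemiring

lemma sum_map_sq_eq {R : Type*} [CommRing R] (s : Multiset R) :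
    (s.map (· ^ 2)).sum = s.sum ^ 2 - 2 * s.esymm 2 := by
  induction s using Multiset.induction with
  | empty => simp [esymm_eq_zero_of_card_lt 0 (k := 2) (by simp)]
  | cons a s ih =>
    rw [esymm_cons_succ, esymm_one, map_cons, sum_cons, sum_cons, ih]
    ring

lemma esymm_map_inv_mul_prod {K : Type*} [Field K] (s : Multiset K) (h0 : (0 : K) ∉ s)
    {k l : ℕ} (hkl : k + l = card s) : (s.map (·⁻¹)).esymm k * s.prod = s.esymm l := by
  induction s using Multiset.induction generalizing k l with
  | empty =>
    obtain ⟨rfl, rfl⟩ : k = 0 ∧ l = 0 := by simpa using hkl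
    simp
  | cons a s ih =>
    have ha : a ≠ 0 := fun h => h0 (h ▸ mem_cons_self a s)
    have hs0 : (0 : K) ∉ s := fun h => h0 (mem_cons_of_mem h)
    rw [card_cons] at hkl
    rw [map_cons, prod_cons]
    match k, l with
    | 0, l =>
      obtain rfl : l = card s + 1 := by omega
      rw [esymm_zero, one_mul, ← prod_cons, ← card_cons a s, esymm_card]
    | k + 1, 0 =>
      obtain rfl : k = card s := by omega
      have := ih hs0 (k := card s) (l := 0) (by omega)
      rw [esymm_zero] at this
      rw [esymm_cons_succ, esymm_eq_zero_of_card_lt _ (by simp), esymm_zero, zero_add,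
        mul_mul_mul_comm, inv_mul_cancel₀ ha, one_mul, this]
    | k + 1, l + 1 =>
      rw [esymm_cons_succ, esymm_cons_succ, ← ih hs0 (k := k + 1) (l := l) (by omega),
        ← ih hs0 (k := k) (l := l + 1) (by omega)]
      field_simp
      ring

lemma prod_eq_zero_of_esymm_card_sub_one_of_esymm_card_sub_two {K : Type*} [Field K]
    [LinearOrder K] [IsStrictOrderedRing K] (s : Multiset K) (hs : 2 ≤ card s)
    (h1 : s.esymm (card s - 1) = 0) (h2 : s.esymm (card s - 2) = 0) : s.prod = 0 := by
  by_contra hprod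
  have h0 : (0 : K) ∉ s := fun h => hprod (prod_eq_zero h)
  have esymm_inv_eq_zero : ∀ k ≤ card s, s.esymm (card s - k) = 0 → (s.map (·⁻¹)).esymm k = 0 :=
    fun k hk h => by
      have := esymm_map_inv_mul_prod s h0 (k := k) (l := card s - k) (by omega)
      rw [h] at this
      exact (mul_eq_zero.mp this).resolve_right hprod
  have hsq : ((s.map (·⁻¹)).map (· ^ 2)).sum = 0 := by
    rw [sum_map_sq_eq, ← esymm_one, esymm_inv_eq_zero 1 (by omega) h1,
      esymm_inv_eq_zero 2 hs h2]
    ring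
  obtain ⟨x, hx⟩ := card_pos_iff_exists_mem.mp (show 0 < card s by omega)
  have hx0 : x ≠ 0 := fun h => h0 (h ▸ hx)
  have hle : x⁻¹ ^ 2 ≤ 0 :=
    hsq ▸ single_le_sum (by simp [sq_nonneg]) _ (by simpa using ⟨x, hx, rfl⟩)
  have hpos : 0 < x⁻¹ ^ 2 := by positivity
  exact hpos.not_ge hle

section Derivative

variable (s : Multiset ℝ)

lemma natDegree_derivative_prod_X_sub_C :
    (derivative (s.map fun a => X - C a).prod).natDegree = card s - 1 := by
  simp [natDegree_multiset_prod_X_sub_C_eq_card]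

lemma card_roots_derivative_prod_X_sub_C :
    card (derivative (s.map fun a => X - C a).prod).roots = card s - 1 := by
  have rolle := card_roots_le_derivative (s.map fun a => X - C a).prod
  have := card_roots' (derivative (s.map fun a => X - C a).prod)
  rw [roots_multiset_prod_X_sub_C] at rolle
  rw [natDegree_derivative_prod_X_sub_C] at this
  omega

lemma card_mul_esymm_roots_derivative_prod_X_sub_C {j : ℕ} (hj : j < card s) :
    card s * (derivative (s.map fun a => X - C a).prod).roots.esymm j =
      (card s - j) * s.esymm j := by
  have vieta := coeff_eq_esymm_roots_of_card
    ((card_roots_derivative_prod_X_sub_C s).trans (natDegree_derivative_prod_X_sub_C s).symm)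
    (k := card s - 1 - j) (by rw [natDegree_derivative_prod_X_sub_C]; omega)
  rw [coeff_derivative, show card s - 1 - j + 1 = card s - j by omega,
    prod_X_sub_C_coeff s (by omega), leadingCoeff_derivative, natDegree_derivative_prod_X_sub_C,
    (monic_multiset_prod_of_monic _ _ fun a _ => monic_X_sub_C a).leadingCoeff,
    natDegree_multiset_prod_X_sub_C_eq_card, show card s - (card s - j) = j by omega,
    show card s - 1 - (card s - 1 - j) = j by omega] at vieta
  have hcast : ((card s - 1 - j : ℕ) : ℝ) + 1 = card s - j := by
    rw [eq_sub_iff_add_eq]; norm_cast; omega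
  rw [hcast] at vieta
  refine mul_left_cancel₀ (pow_ne_zero j (by norm_num : (-1 : ℝ) ≠ 0)) ?_
  linear_combination -vieta

lemma esymm_roots_derivative_prod_X_sub_C_eq_zero_iff {k : ℕ} (hk : k < card s) :
    (derivative (s.map fun a => X - C a).prod).roots.esymm k = 0 ↔ s.esymm k = 0 := by
  have hs : (card s : ℝ) ≠ 0 := by norm_cast; omega
  have hsk : (card s : ℝ) - k ≠ 0 := sub_ne_zero.mpr (by norm_cast; omega)
  rw [← mul_eq_zero_iff_left hs, card_mul_esymm_roots_derivative_prod_X_sub_C s hk,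
    mul_eq_zero_iff_left hsk]

end Derivative

theorem esymm_eq_zero_of_esymm_eq_zero_of_esymm_succ_eq_zero {r : ℕ} (s : Multiset ℝ)
    (h1 : s.esymm r = 0) (h2 : s.esymm (r + 1) = 0) {j : ℕ} (hrj : r ≤ j) (hjs : j ≤ card s) :
    s.esymm j = 0 := by
  induction hs : card s using Nat.strong_induction_on generalizing s j with
  | _ m ih =>
    obtain rfl | rfl | hj : j = r ∨ j = r + 1 ∨ r + 2 ≤ j := by omega
    · exact h1
    · exact h2
    set t := (derivative (s.map fun a => X - C a).prod).roots
    have ht : card t = m - 1 := hs ▸ card_roots_derivative_prod_X_sub_C s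
    have hs0 : ∀ k, r ≤ k → k < m → s.esymm k = 0 := fun k hrk hkm =>
      (esymm_roots_derivative_prod_X_sub_C_eq_zero_iff s (hs ▸ hkm)).1 <|
        ih (m - 1) (by omega) t
          ((esymm_roots_derivative_prod_X_sub_C_eq_zero_iff s (by omega)).2 h1)
          ((esymm_roots_derivative_prod_X_sub_C_eq_zero_iff s (by omega)).2 h2)
          hrk (by omega) ht
    obtain hjm | rfl := hjs.lt_or_eq
    · exact hs0 j hrj (hs ▸ hjm)
    · rw [esymm_card]
      exact prod_eq_zero_of_esymm_card_sub_one_of_esymm_card_sub_two s (by omega)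
        (hs0 _ (by omega) (by omega)) (hs0 _ (by omega) (by omega))

end Multiset

lemma esymm_eq_multiset_esymm (n k : ℕ) (v : Fin n → ℝ) :
    esymm n k v = (Finset.univ.val.map v).esymm k :=
  (Finset.esymm_map_val v Finset.univ k).symm

theorem esymm_vanishing_propagates_general (n r : ℕ)
    (lam : Fin n → ℝ) (h1 : esymm n r lam = 0) (h2 : esymm n (r + 1) lam = 0) :
    ∀ j : ℕ, r ≤ j → j ≤ n → esymm n j lam = 0 := by
  intro j hrj hjn
  rw [esymm_eq_multiset_esymm] at h1 h2 ⊢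
  exact Multiset.esymm_eq_zero_of_esymm_eq_zero_of_esymm_succ_eq_zero _ h1 h2 hrj (by simpa)

/-- Caminha, Proposition 1(c): if `S_r = S_{r+1} = 0` then `S_j = 0` for all `r ≤ j ≤ n`. -/
theorem esymm_vanishing_propagates (n r : ℕ) (hr : 1 ≤ r) (hrn : r < n)
    (lam : Fin n → ℝ) (h1 : esymm n r lam = 0) (h2 : esymm n (r + 1) lam = 0) :
    ∀ j : ℕ, r ≤ j → j ≤ n → esymm n j lam = 0 :=
  esymm_vanishing_propagates_general n r lam h1 h2
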